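/- The vectors v_P and v_D are orthogonal: ⟨v_P, v_D⟩ = 0. -/

import Mathlib

/-!
A point `x - y` of `dom f - dom g` satisfies `⟪x - y, v_P⟫ ≥ ‖v_P‖² ≥ 0`, since `v_P` is the
minimum-norm point of a convex set; so `⟪·, v_P⟫` is bounded below on `dom f` and above on `dom g`.
A linear bound `⟪x, e⟫ ≤ M` on `dom f` gives `f*(u + e) ≤ f*(u) + M`, so `e` is a recession
direction of `dom f*`. Hence `s • v_P` is a recession direction of `dom f* + dom g*` and of its
closure for every real `s`, the whole line `v_D + ℝ v_P` lies in that closure, and minimality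
of `‖v_D‖` along this line forces `⟪v_D, v_P⟫ = 0`.
-/

open scoped InnerProductSpace Pointwise Classical
open Filter Topology

noncomputable section

variable {H : Type*} [NormedAddCommGroup H] [InnerProductSpace ℝ H]

/-- The effective domain of an extended-real-valued function. -/
def fdom {α : Type*} (f : α → EReal) : Set α := {x | f x ≠ ⊤}

/-- The Fenchel conjugate `f*(u) = sup_x (⟪x, u⟫ - f x)`. -/
def fconj (f : H → EReal) : H → EReal :=
  fun u => ⨆ x : H, ((⟪x, u⟫_ℝ : ℝ) : EReal) - f x

/-- The recession function `(rec f)(y) = sup_{x ∈ dom f} (f (x + y) - f x)`. -/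
def recFn (f : H → EReal) : H → EReal :=
  fun y => ⨆ x ∈ fdom f, (f (x + y) - f x)

/-- A proper function: never `-∞` and not identically `+∞`. -/
def ProperFn {α : Type*} (f : α → EReal) : Prop := (∀ x, f x ≠ ⊥) ∧ ∃ x, f x ≠ ⊤

/-- Convexity of an extended-real-valued function, via convexity of its epigraph. -/
def ConvexFn (f : H → EReal) : Prop :=
  Convex ℝ {p : H × ℝ | f p.1 ≤ (p.2 : EReal)}

/-- `v` is the element of minimum norm of `S`, i.e. `v = P_S 0`, the metric
projection of `0` onto `S`. -/
def IsMinNormPoint (S : Set H) (v : H) : Prop := v ∈ S ∧ ∀ w ∈ S, ‖v‖ ≤ ‖w‖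

/-- `p` is the metric projection of `x` onto `S`, i.e. `p = P_S x`. -/
def IsProjOn (S : Set H) (x p : H) : Prop := p ∈ S ∧ ∀ w ∈ S, dist x p ≤ dist x w

/-- The polar cone `S° = {u | ∀ x ∈ S, ⟪x, u⟫ ≤ 0}`. -/
def polarCone (s : Set H) : Set H := {u | ∀ x ∈ s, ⟪x, u⟫_ℝ ≤ 0}

/-- The recession cone `rec S = {x | ∀ y ∈ S, x + y ∈ S}`. -/
def recCone (s : Set H) : Set H := {x | ∀ y ∈ s, x + y ∈ s}

/-- `p = prox_f w`: `p` minimizes `y ↦ f y + ½‖y - w‖²`. -/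
def IsProxOf (f : H → EReal) (w p : H) : Prop :=
  ∀ y : H, f p + ((1 / 2 * ‖p - w‖ ^ 2 : ℝ) : EReal) ≤ f y + ((1 / 2 * ‖y - w‖ ^ 2 : ℝ) : EReal)

open Set

theorem ConvexFn.convex_fdom {f : H → EReal} (hf : ConvexFn f) : Convex ℝ (fdom f) := by
  have hdom : fdom f = LinearMap.fst ℝ H ℝ '' {p : H × ℝ | f p.1 ≤ (p.2 : EReal)} := by
    ext x
    simp only [fdom, mem_image, LinearMap.fst_apply, Prod.exists, exists_and_right,
      exists_eq_right, ← lt_top_iff_ne_top]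
    exact ⟨fun h => (EReal.lt_iff_exists_real_btwn.mp h).imp fun r hr => hr.1.le,
      fun ⟨r, hr⟩ => hr.trans_lt (EReal.coe_lt_top r)⟩
  rw [hdom]
  exact hf.linear_image _

section MinNorm

variable {S : Set H} {v d : H}

theorem inner_nonneg_of_norm_le_norm_add_smul (h : ∀ t ∈ Ioc (0 : ℝ) 1, ‖v‖ ≤ ‖v + t • d‖) :
    0 ≤ ⟪v, d⟫_ℝ := by
  have hlim : Tendsto (fun t : ℝ => 2 * ⟪v, d⟫_ℝ + t * ‖d‖ ^ 2) (𝓝[>] 0) (𝓝 (2 * ⟪v, d⟫_ℝ)) := by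
    have hcont : Continuous fun t : ℝ => 2 * ⟪v, d⟫_ℝ + t * ‖d‖ ^ 2 := by fun_prop
    have h0 := hcont.tendsto 0
    rw [zero_mul, add_zero] at h0
    exact tendsto_nhdsWithin_of_tendsto_nhds h0
  have hev : ∀ᶠ t in 𝓝[>] (0 : ℝ), 0 ≤ 2 * ⟪v, d⟫_ℝ + t * ‖d‖ ^ 2 := by
    filter_upwards [Ioc_mem_nhdsGT one_pos] with t ht
    have hsq := pow_le_pow_left₀ (norm_nonneg v) (h t ht) 2
    rw [norm_add_sq_real, real_inner_smul_right, norm_smul, Real.norm_of_nonneg ht.1.le] at hsq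
    nlinarith [ht.1]
  linarith [ge_of_tendsto hlim hev]

theorem IsMinNormPoint.inner_sub_nonneg (hS : Convex ℝ S) (hv : IsMinNormPoint S v) {w : H}
    (hw : w ∈ S) : 0 ≤ ⟪v, w - v⟫_ℝ :=
  inner_nonneg_of_norm_le_norm_add_smul fun _ ht =>
    hv.2 _ (hS.add_smul_sub_mem hv.1 hw (Ioc_subset_Icc_self ht))

theorem IsMinNormPoint.inner_eq_zero_of_add_smul_mem (hv : IsMinNormPoint S v)
    (hline : ∀ t : ℝ, v + t • d ∈ S) : ⟪v, d⟫_ℝ = 0 := by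
  have hpos := inner_nonneg_of_norm_le_norm_add_smul (d := d) fun t _ => hv.2 _ (hline t)
  have hneg := inner_nonneg_of_norm_le_norm_add_smul (d := -d) fun t _ => by
    simpa only [smul_neg, ← neg_smul] using hv.2 _ (hline (-t))
  rw [inner_neg_right] at hneg
  linarith

theorem IsMinNormPoint.inner_le_inner_of_mem_sub {A B : Set H} (hA : Convex ℝ A)
    (hB : Convex ℝ B) (hv : IsMinNormPoint (closure (A - B)) v) {a b : H} (ha : a ∈ A)
    (hb : b ∈ B) : ⟪b, v⟫_ℝ ≤ ⟪a, v⟫_ℝ := by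
  have h := hv.inner_sub_nonneg (hA.sub hB).closure (subset_closure (sub_mem_sub ha hb))
  rw [inner_sub_right, inner_sub_right, real_inner_self_eq_norm_sq, real_inner_comm a,
    real_inner_comm b] at h
  nlinarith [sq_nonneg ‖v‖]

end MinNorm

section RecessionCone

variable {E : Type*} [NormedAddCommGroup E] {s t : Set E}

theorem recCone_subset_recCone_add_left : recCone s ⊆ recCone (s + t) := by
  rintro e he _ ⟨x, hx, y, hy, rfl⟩
  rw [← add_assoc]
  exact add_mem_add (he x hx) hy

theorem recCone_subset_recCone_add_right : recCone t ⊆ recCone (s + t) := by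
  rintro e he _ ⟨x, hx, y, hy, rfl⟩
  rw [add_left_comm]
  exact add_mem_add hx (he y hy)

theorem recCone_subset_recCone_closure : recCone s ⊆ recCone (closure s) := fun e he _ hy =>
  (continuous_const_add e).continuousWithinAt.mem_closure_image hy |>
    closure_mono (image_subset_iff.mpr he)

end RecessionCone

section Conjugate

variable {f : H → EReal} {e : H} {M : ℝ}

theorem fconj_add_le (hM : ∀ x ∈ fdom f, ⟪x, e⟫_ℝ ≤ M) (u : H) :
    fconj f (u + e) ≤ fconj f u + M := by
  refine iSup_le fun x => ?_
  by_cases hx : f x = ⊤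
  · rw [hx, EReal.sub_top]
    exact bot_le
  calc ((⟪x, u + e⟫_ℝ : ℝ) : EReal) - f x
      = ((⟪x, u⟫_ℝ : ℝ) : EReal) - f x + ((⟪x, e⟫_ℝ : ℝ) : EReal) := by
        rw [inner_add_right, EReal.coe_add, sub_eq_add_neg, sub_eq_add_neg, add_right_comm]
    _ ≤ fconj f u + M := add_le_add (le_iSup (fun y => ((⟪y, u⟫_ℝ : ℝ) : EReal) - f y) x)
        (EReal.coe_le_coe_iff.mpr (hM x hx))

theorem mem_recCone_fdom_fconj (hM : ∀ x ∈ fdom f, ⟪x, e⟫_ℝ ≤ M) :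
    e ∈ recCone (fdom (fconj f)) := fun u hu => by
  rw [add_comm]
  exact ne_top_of_le_ne_top (EReal.add_ne_top hu (EReal.coe_ne_top M)) (fconj_add_le hM u)

theorem smul_mem_recCone_fdom_fconj_add {g : H → EReal} {v : H} (hf : (fdom f).Nonempty)
    (hg : (fdom g).Nonempty) (hsep : ∀ x ∈ fdom f, ∀ y ∈ fdom g, ⟪y, v⟫_ℝ ≤ ⟪x, v⟫_ℝ) (s : ℝ) :
    s • v ∈ recCone (fdom (fconj f) + fdom (fconj g)) := by
  obtain ⟨x₀, hx₀⟩ := hf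
  obtain ⟨y₀, hy₀⟩ := hg
  rcases le_total 0 s with hs | hs
  · refine recCone_subset_recCone_add_right (mem_recCone_fdom_fconj (M := s * ⟪x₀, v⟫_ℝ) ?_)
    intro y hy
    rw [real_inner_smul_right]
    exact mul_le_mul_of_nonneg_left (hsep x₀ hx₀ y hy) hs
  · refine recCone_subset_recCone_add_left (mem_recCone_fdom_fconj (M := s * ⟪y₀, v⟫_ℝ) ?_)
    intro x hx
    rw [real_inner_smul_right]
    exact mul_le_mul_of_nonpos_left (hsep x hx y₀ hy₀) hs

end Conjugate

theorem inner_vP_vD_eq_zero_general {H : Type*} [NormedAddCommGroup H] [InnerProductSpace ℝ H]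
    (f g : H → EReal)
    (hf_prop : ProperFn f) (hf_cvx : ConvexFn f)
    (hg_prop : ProperFn g) (hg_cvx : ConvexFn g)
    (vP : H) (hvP : IsMinNormPoint (closure (fdom f - fdom g)) vP)
    (vD : H) (hvD : IsMinNormPoint (closure (fdom (fconj f) + fdom (fconj g))) vD)
    : ⟪vP, vD⟫_ℝ = 0 := by
  have hsep : ∀ x ∈ fdom f, ∀ y ∈ fdom g, ⟪y, vP⟫_ℝ ≤ ⟪x, vP⟫_ℝ := fun _ hx _ hy =>
    hvP.inner_le_inner_of_mem_sub hf_cvx.convex_fdom hg_cvx.convex_fdom hx hy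
  have hline : ∀ s : ℝ, vD + s • vP ∈ closure (fdom (fconj f) + fdom (fconj g)) := fun s => by
    rw [add_comm vD]
    exact recCone_subset_recCone_closure
      (smul_mem_recCone_fdom_fconj_add hf_prop.2 hg_prop.2 hsep s) vD hvD.1
  rw [real_inner_comm]
  exact hvD.inner_eq_zero_of_add_smul_mem hline

theorem inner_vP_vD_eq_zero {H : Type*} [NormedAddCommGroup H] [InnerProductSpace ℝ H]
    [FiniteDimensional ℝ H]
    (f g : H → EReal)
    (hf_prop : ProperFn f) (hf_lsc : LowerSemicontinuous f) (hf_cvx : ConvexFn f)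
    (hg_prop : ProperFn g) (hg_lsc : LowerSemicontinuous g) (hg_cvx : ConvexFn g)
    (vP : H) (hvP : IsMinNormPoint (closure (fdom f - fdom g)) vP)
    (vD : H) (hvD : IsMinNormPoint (closure (fdom (fconj f) + fdom (fconj g))) vD)
    : ⟪vP, vD⟫_ℝ = 0 :=
  inner_vP_vD_eq_zero_general f g hf_prop hf_cvx hg_prop hg_cvx vP hvP vD hvD

end
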